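/- arXiv:0807.0434 — 2 statements merged into one kernel-verified Lean document; each statement's English description precedes it below -/
import Mathlib

section
/- For any group G and any i, the quotient G_r^{(i)} / G_r^{(i+1)} is a torsion-free abelian group. -/
/-- The subgroup generated by commutators of elements of a set `S`. -/
def commutatorOfSet {G : Type*} [Group G] (S : Set G) : Subgroup G :=
  Subgroup.closure {x | ∃ a ∈ S, ∃ b ∈ S, x = a * b * a⁻¹ * b⁻¹}

/-- The rational derived series of a group `G`. -/
def ratDerivedSeries (G : Type*) [Group G] : ℕ → Set G
  | 0 => Set.univ
  | i + 1 =>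
      {g : G | g ∈ ratDerivedSeries G i ∧
        ∃ k : ℕ, 0 < k ∧ g ^ k ∈ commutatorOfSet (ratDerivedSeries G i)}

/-!
Write `H = G_r^{(i)}`. An element `g ∈ H` has a positive power in `[H, H]` exactly when its image
in the abelianization `Hᵃᵇ` has finite order, so `G_r^{(i+1)}` is the kernel of the surjection
`H → Hᵃᵇ / torsion`. Hence `G_r^{(i)} / G_r^{(i+1)} ≃* Hᵃᵇ / torsion`, which is abelian and
torsion-free; by induction every `G_r^{(i)}` is a subgroup.
-/

open CommGroup QuotientGroup

lemma commutatorOfSet_coe {G : Type*} [Group G] (H : Subgroup G) :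
    commutatorOfSet (H : Set G) = ⁅H, H⁆ := by
  simp only [commutatorOfSet, Subgroup.commutator_def, commutatorElement_def, SetLike.mem_coe,
    eq_comm]

section RationalCommutator

variable (H : Type*) [Group H]

def toAbelianizationModTorsion : H →* Abelianization H ⧸ torsion (Abelianization H) :=
  (mk' _).comp Abelianization.of

lemma toAbelianizationModTorsion_surjective :
    Function.Surjective (toAbelianizationModTorsion H) :=
  (mk'_surjective _).comp (mk'_surjective _)

-- Defined as a kernel so that normality and the shape of the quotient come for free.
def rationalCommutator : Subgroup H := (toAbelianizationModTorsion H).ker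

instance : (rationalCommutator H).Normal := MonoidHom.normal_ker _

variable {H} in
lemma mem_rationalCommutator {x : H} :
    x ∈ rationalCommutator H ↔ ∃ k, 0 < k ∧ x ^ k ∈ commutator H := by
  rw [rationalCommutator, MonoidHom.mem_ker, toAbelianizationModTorsion, MonoidHom.comp_apply,
    mk'_apply, eq_one_iff, mem_torsion, isOfFinOrder_iff_pow_eq_one]
  simp only [← map_pow, ← MonoidHom.mem_ker, Abelianization.ker_of]

noncomputable def quotientRationalCommutatorEquiv :
    H ⧸ rationalCommutator H ≃* Abelianization H ⧸ torsion (Abelianization H) :=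
  quotientKerEquivOfSurjective _ (toAbelianizationModTorsion_surjective H)

lemma quotient_rationalCommutator_mul_comm (a b : H ⧸ rationalCommutator H) :
    a * b = b * a :=
  (quotientRationalCommutatorEquiv H).injective (by simp only [map_mul, mul_comm])

instance : IsMulTorsionFree (H ⧸ rationalCommutator H) :=
  Function.Injective.isMulTorsionFree _ (quotientRationalCommutatorEquiv H).injective

end RationalCommutator

lemma coe_map_subtype_rationalCommutator {G : Type*} [Group G] (H : Subgroup G) :
    ((rationalCommutator H).map H.subtype : Set G) =
      {g | g ∈ H ∧ ∃ k, 0 < k ∧ g ^ k ∈ ⁅H, H⁆} := by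
  ext g
  constructor
  · rintro ⟨x, hx, rfl⟩
    obtain ⟨k, hk, hxk⟩ := mem_rationalCommutator.mp hx
    exact ⟨x.2, k, hk, H.map_subtype_commutator ▸ ⟨x ^ k, hxk, rfl⟩⟩
  · rintro ⟨hg, k, hk, hgk⟩
    rw [← H.map_subtype_commutator] at hgk
    obtain ⟨y, hy, hyg⟩ := hgk
    refine ⟨⟨g, hg⟩, mem_rationalCommutator.mpr ⟨k, hk, ?_⟩, rfl⟩
    rwa [show (⟨g, hg⟩ : H) ^ k = y from Subtype.ext hyg.symm]

def ratDerivedSubgroup (G : Type*) [Group G] : ℕ → Subgroup G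
  | 0 => ⊤
  | i + 1 => (rationalCommutator (ratDerivedSubgroup G i)).map (ratDerivedSubgroup G i).subtype

lemma coe_ratDerivedSubgroup (G : Type*) [Group G] (i : ℕ) :
    (ratDerivedSubgroup G i : Set G) = ratDerivedSeries G i := by
  induction i with
  | zero => rfl
  | succ i ih =>
    rw [ratDerivedSubgroup, coe_map_subtype_rationalCommutator, ratDerivedSeries, ← ih,
      commutatorOfSet_coe]
    rfl

/-- For any group `G` and any `i`, the successive terms of the rational derived
series are subgroups, `G_r^{(i+1)}` is normal in `G_r^{(i)}`, and the quotient
`G_r^{(i)} / G_r^{(i+1)}` is a torsion-free abelian group. -/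
theorem stmt3 (G : Type*) [Group G] (i : ℕ) :
    ∃ H K : Subgroup G,
      (H : Set G) = ratDerivedSeries G i ∧
      (K : Set G) = ratDerivedSeries G (i + 1) ∧
      ∃ hn : (K.subgroupOf H).Normal,
        letI := hn
        (∀ a b : H ⧸ K.subgroupOf H, a * b = b * a) ∧
        (∀ a : H ⧸ K.subgroupOf H, ∀ n : ℕ, 0 < n → a ^ n = 1 → a = 1) := by
  set H := ratDerivedSubgroup G i
  have hK : (ratDerivedSubgroup G (i + 1)).subgroupOf H = rationalCommutator H := by
    rw [← Subgroup.comap_subtype]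
    exact Subgroup.comap_map_eq_self_of_injective H.subtype_injective _
  refine ⟨H, _, coe_ratDerivedSubgroup G i, coe_ratDerivedSubgroup G (i + 1), ?_⟩
  rw [hK]
  exact ⟨inferInstance, quotient_rationalCommutator_mul_comm H,
    fun a n hn ↦ (pow_eq_one_iff_left hn.ne').mp⟩
end

section
/- Let Γ be a group, n a natural number, and A a subgroup of Γ such that A is generated by [A,A] together with a single element x. If x ∈ Γ^{(n)}, then A ⊆ Γ^{(n)}, and consequently [A,A] ⊆ Γ^{(n+1)}. -/
theorem Subgroup.commutator_le_derivedSeries_succ {G : Type*} [Group G] {A : Subgroup G} {n : ℕ}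
    (hA : A ≤ derivedSeries G n) : ⁅A, A⁆ ≤ derivedSeries G (n + 1) :=
  derivedSeries_succ G n ▸ Subgroup.commutator_mono hA hA

/-- Climb the derived series: if `A ≤ G^{(k)}` with `k < n`, then
`[A,A] ⊔ B ≤ G^{(k+1)} ⊔ G^{(n)} = G^{(k+1)}`. -/
theorem Subgroup.le_derivedSeries_of_le_commutator_sup {G : Type*} [Group G]
    {A B : Subgroup G} {n : ℕ} (hA : A ≤ ⁅A, A⁆ ⊔ B) (hB : B ≤ derivedSeries G n) :
    A ≤ derivedSeries G n := by
  suffices ∀ k ≤ n, A ≤ derivedSeries G k from this n le_rfl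
  intro k
  induction k with
  | zero => exact fun _ => derivedSeries_zero G ▸ le_top
  | succ k ih =>
    intro hk
    have hAk : A ≤ derivedSeries G k := ih (Nat.le_of_succ_le hk)
    exact hA.trans <| sup_le (commutator_le_derivedSeries_succ hAk)
      (hB.trans (derivedSeries_antitone G hk))

/-- If a subgroup `A` of `Γ` is generated by `[A,A]` together with a single
element `x`, and `x ∈ Γ^{(n)}`, then `A ⊆ Γ^{(n)}` and `[A,A] ⊆ Γ^{(n+1)}`. -/
theorem stmt4 (Γ : Type*) [Group Γ] (n : ℕ) (A : Subgroup Γ) (x : Γ)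
    (hgen : A = ⁅A, A⁆ ⊔ Subgroup.closure {x})
    (hx : x ∈ derivedSeries Γ n) :
    A ≤ derivedSeries Γ n ∧ ⁅A, A⁆ ≤ derivedSeries Γ (n + 1) := by
  have hA : A ≤ derivedSeries Γ n :=
    Subgroup.le_derivedSeries_of_le_commutator_sup hgen.le
      (Subgroup.closure_le _ |>.mpr (Set.singleton_subset_iff.mpr hx))
  exact ⟨hA, Subgroup.commutator_le_derivedSeries_succ hA⟩
end
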